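/- Let S be a semigroup satisfying conditions (A), (B), (C), and let Q be the semigroup of ~-classes of Σ. For all a, b ∈ S: if l(a) ≥ l(b) then [a,a][b,b] = [a,a], and if l(b) ≥ l(a) then [a,a][b,b] = [b,b]; in particular idempotents of Q commute, [a,a] = [b,b] whenever l(a) = l(b), and the idempotents of Q form an ω-chain: the map sending the idempotent [a,a] to l(a) ∈ ℕ is a well-defined bijection from the set of idempotents of Q onto ℕ that reverses the order e ≤ f ⟺ ef = fe = e. -/

import Mathlib

/-! Call `(a, b) ∈ Σ` coequalized if `w * a = w * b` for some `w` with `l w = r a`; these are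
exactly the pairs `∼` to a diagonal pair `(e, e)`, and (C) makes them closed under the product
of `Q`. So `[a,a][b,b] = [e,e]` for some `e`, and computing in `𝓑` gives
`l e = max (l a) (l b)`. As `[e,e] = [f,f]` iff `l e = l f`, this is the product rule for the
diagonal classes. By (B)(i) every idempotent of `Q` is diagonal, and by (A) every `n ∈ ℕ` is
some `l a`. -/

/-- The bicyclic semigroup `𝓑` carried by `ℕ × ℕ`, an element being `(r, l)`;
`(m,n)(p,q) = (m - n + t, q - p + t)` with `t = max n p`. -/
structure Bicyclic where
  r : ℕ
  l : ℕ

instance : Mul Bicyclic :=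
  ⟨fun x y => ⟨x.r + (max x.l y.r - x.l), y.l + (max x.l y.r - y.r)⟩⟩

/-- The inverse `(m,n)⁻¹ = (n,m)` in the bicyclic semigroup. -/
def Bicyclic.inv (x : Bicyclic) : Bicyclic := ⟨x.l, x.r⟩

/-- `T` is a left I-order in the bicyclic semigroup `𝓑`. -/
def IsLeftIOrderBic (T : Set Bicyclic) : Prop :=
  ∀ q : Bicyclic, ∃ a ∈ T, ∃ b ∈ T, q = a.inv * b

/-- `r a`, the first coordinate of `φ a` in `𝓑`. -/
def rr {S : Type*} [Mul S] (φ : S →ₙ* Bicyclic) (a : S) : ℕ := (φ a).r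

/-- `l a`, the second coordinate of `φ a` in `𝓑`. -/
def ll {S : Type*} [Mul S] (φ : S →ₙ* Bicyclic) (a : S) : ℕ := (φ a).l

/-- Condition (A): the image of `φ` is a left I-order in `𝓑`. -/
def CondA {S : Type*} [Mul S] (φ : S →ₙ* Bicyclic) : Prop :=
  IsLeftIOrderBic (Set.range (⇑φ))

/-- Condition (B)(i): if `l x, l y ≥ r a` and `x * a = y * a` then `x = y`. -/
def CondBi {S : Type*} [Mul S] (φ : S →ₙ* Bicyclic) : Prop :=
  ∀ x y a : S, rr φ a ≤ ll φ x → rr φ a ≤ ll φ y → x * a = y * a → x = y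

/-- Condition (B)(ii): if `r x, r y ≥ l a` and `a * x = a * y` then `x = y`. -/
def CondBii {S : Type*} [Mul S] (φ : S →ₙ* Bicyclic) : Prop :=
  ∀ x y a : S, ll φ a ≤ rr φ x → ll φ a ≤ rr φ y → a * x = a * y → x = y

/-- Condition (C): for all `b c` there are `x y` with `x * b = y * c`,
`r x = r y`, `l x = r b - l b + max (l b) (l c)` and
`l y = r c - l c + max (l b) (l c)`. -/
def CondC {S : Type*} [Mul S] (φ : S →ₙ* Bicyclic) : Prop :=
  ∀ b c : S, ∃ x y : S, x * b = y * c ∧ rr φ x = rr φ y ∧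
    ll φ x = rr φ b + (max (ll φ b) (ll φ c) - ll φ b) ∧
    ll φ y = rr φ c + (max (ll φ b) (ll φ c) - ll φ c)

/-- `Σ = {(a,b) ∈ S × S : r a = r b}`. -/
abbrev Sig {S : Type*} [Mul S] (φ : S →ₙ* Bicyclic) : Type _ :=
  {p : S × S // rr φ p.1 = rr φ p.2}

/-- The relation `∼` on pairs: `(a,b) ∼ (c,d)` iff there are `x y` with
`x * a = y * c`, `x * b = y * d`, `l x = r a`, `l y = r c`, `r x = r y`. -/
def simP {S : Type*} [Mul S] (φ : S →ₙ* Bicyclic) (p q : S × S) : Prop :=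
  ∃ x y : S, x * p.1 = y * q.1 ∧ x * p.2 = y * q.2 ∧
    ll φ x = rr φ p.1 ∧ ll φ y = rr φ q.1 ∧ rr φ x = rr φ y

/-- The relation `∼` on `Σ`. -/
def sim {S : Type*} [Mul S] (φ : S →ₙ* Bicyclic) (p q : Sig φ) : Prop :=
  simP φ p.1 q.1

theorem rr_mul {S : Type*} [Mul S] (φ : S →ₙ* Bicyclic) (x a : S) :
    rr φ (x * a) = rr φ x + (max (ll φ x) (rr φ a) - ll φ x) := by
  simp only [rr, ll, map_mul]; rfl

theorem rr_mul_eq {S : Type*} [Mul S] (φ : S →ₙ* Bicyclic) {x a : S}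
    (h : rr φ a ≤ ll φ x) : rr φ (x * a) = rr φ x := by
  have h1 := rr_mul φ x a
  have h2 : max (ll φ x) (rr φ a) = ll φ x := max_eq_left h
  omega

theorem sig_mul_ok {S : Type*} [Mul S] (φ : S →ₙ* Bicyclic) {a b c d x y : S}
    (hab : rr φ a = rr φ b) (hcd : rr φ c = rr φ d)
    (hx : ll φ x = rr φ b + (max (ll φ b) (ll φ c) - ll φ b))
    (hy : ll φ y = rr φ c + (max (ll φ b) (ll φ c) - ll φ c))
    (hr : rr φ x = rr φ y) : rr φ (x * a) = rr φ (y * d) := by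
  have h1 := rr_mul_eq φ (x := x) (a := a)
    (by have := le_max_left (ll φ b) (ll φ c); omega)
  have h2 := rr_mul_eq φ (x := y) (a := d)
    (by have := le_max_right (ll φ b) (ll φ c); omega)
  omega

/-- The set `Q` of `∼`-classes of `Σ`. -/
def QT {S : Type*} [Mul S] (φ : S →ₙ* Bicyclic) : Type _ := Quot (sim φ)

/-- The `∼`-class `[a,b]` of an element of `Σ`. -/
def cls {S : Type*} [Mul S] (φ : S →ₙ* Bicyclic) (p : Sig φ) : QT φ :=
  Quot.mk _ p

/-- Packaging `(a, b)` with `r a = r b` as an element of `Σ`. -/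
def mkSig {S : Type*} [Mul S] (φ : S →ₙ* Bicyclic) (a b : S)
    (h : rr φ a = rr φ b) : Sig φ := ⟨(a, b), h⟩

/-- A chosen witness `x` from condition (C) applied to `b, c`. -/
noncomputable def cx {S : Type*} [Mul S] {φ : S →ₙ* Bicyclic} (hC : CondC φ)
    (b c : S) : S := (hC b c).choose

/-- A chosen witness `y` from condition (C) applied to `b, c`. -/
noncomputable def cy {S : Type*} [Mul S] {φ : S →ₙ* Bicyclic} (hC : CondC φ)
    (b c : S) : S := (hC b c).choose_spec.choose

theorem c_spec {S : Type*} [Mul S] {φ : S →ₙ* Bicyclic} (hC : CondC φ) (b c : S) :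
    cx hC b c * b = cy hC b c * c ∧ rr φ (cx hC b c) = rr φ (cy hC b c) ∧
    ll φ (cx hC b c) = rr φ b + (max (ll φ b) (ll φ c) - ll φ b) ∧
    ll φ (cy hC b c) = rr φ c + (max (ll φ b) (ll φ c) - ll φ c) :=
  (hC b c).choose_spec.choose_spec

/-- Representative-level multiplication: `(a,b) · (c,d) = (x * a, y * d)` where
`x, y` are the witnesses from condition (C) for `b, c`. -/
noncomputable def pairMul {S : Type*} [Mul S] {φ : S →ₙ* Bicyclic} (hC : CondC φ)
    (p q : Sig φ) : Sig φ :=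
  ⟨(cx hC p.1.2 q.1.1 * p.1.1, cy hC p.1.2 q.1.1 * q.1.2),
    sig_mul_ok φ p.2 q.2 (c_spec hC p.1.2 q.1.1).2.2.1
      (c_spec hC p.1.2 q.1.1).2.2.2 (c_spec hC p.1.2 q.1.1).2.1⟩

/-- The multiplication `[a,b][c,d] = [x*a, y*d]` on the set `Q` of `∼`-classes. -/
noncomputable def qmul {S : Type*} [Mul S] {φ : S →ₙ* Bicyclic} (hC : CondC φ)
    (u v : QT φ) : QT φ :=
  cls φ (pairMul hC (Quot.out u) (Quot.out v))

theorem ll_cx_self {S : Type*} [Mul S] {φ : S →ₙ* Bicyclic} (hC : CondC φ)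
    (a : S) : ll φ (cx hC a a) = rr φ a := by
  have h := (c_spec hC a a).2.2.1
  have h2 : max (ll φ a) (ll φ a) = ll φ a := max_self _
  omega

/-- The embedding `θ : S → Q`, `a θ = [x, x*a]` for a chosen `x` with `l x = r a`. -/
noncomputable def theta {S : Type*} [Mul S] {φ : S →ₙ* Bicyclic} (hC : CondC φ)
    (a : S) : QT φ :=
  cls φ ⟨(cx hC a a, cx hC a a * a), (rr_mul_eq φ (ll_cx_self hC a).ge).symm⟩

/-- The inverse `[a,b]⁻¹ = [b,a]` on `Q`. -/
noncomputable def qinv {S : Type*} [Mul S] {φ : S →ₙ* Bicyclic} (u : QT φ) :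
    QT φ :=
  cls φ ⟨((Quot.out u).1.2, (Quot.out u).1.1), (Quot.out u).2.symm⟩

section Arithmetic

variable {S : Type*} [Mul S] {φ : S →ₙ* Bicyclic}

theorem ll_mul (φ : S →ₙ* Bicyclic) (x a : S) :
    ll φ (x * a) = ll φ a + (max (ll φ x) (rr φ a) - rr φ a) := by
  simp only [rr, ll, map_mul]; rfl

theorem ll_mul_of_le (φ : S →ₙ* Bicyclic) {x a : S} (h : rr φ a ≤ ll φ x) :
    ll φ (x * a) = ll φ a + (ll φ x - rr φ a) := by
  have := ll_mul φ x a
  omega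

theorem ll_mul_of_eq (φ : S →ₙ* Bicyclic) {x a : S} (h : ll φ x = rr φ a) :
    ll φ (x * a) = ll φ a := by
  have := ll_mul_of_le φ h.ge
  omega

theorem ll_cx_of_le (hC : CondC φ) {b c : S} (h : ll φ c ≤ ll φ b) :
    ll φ (cx hC b c) = rr φ b := by
  have := (c_spec hC b c).2.2.1
  omega

theorem ll_cy_of_le (hC : CondC φ) {b c : S} (h : ll φ b ≤ ll φ c) :
    ll φ (cy hC b c) = rr φ c := by
  have := (c_spec hC b c).2.2.2
  omega

theorem exists_ll_eq (hA : CondA φ) (n : ℕ) : ∃ a : S, ll φ a = n := by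
  obtain ⟨_, ⟨a, rfl⟩, _, ⟨b, rfl⟩, h⟩ := hA ⟨n, n⟩
  have hr : n = (φ a).l + (max (φ a).r (φ b).r - (φ a).r) := congrArg Bicyclic.r h
  have hl : n = (φ b).l + (max (φ a).r (φ b).r - (φ b).r) := congrArg Bicyclic.l h
  rcases le_total (φ b).r (φ a).r with hle | hle
  · exact ⟨a, show (φ a).l = n by omega⟩
  · exact ⟨b, show (φ b).l = n by omega⟩

theorem simP.ll_eq {a b c d : S} (hab : rr φ a = rr φ b) (hcd : rr φ c = rr φ d)
    (h : simP φ (a, b) (c, d)) : ll φ a = ll φ c ∧ ll φ b = ll φ d := by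
  obtain ⟨x, y, hac, hbd, hx, hy, -⟩ := h
  dsimp only at hac hbd hx hy
  have ha := ll_mul_of_eq φ hx
  have hb := ll_mul_of_eq φ (hx.trans hab)
  have hc := ll_mul_of_eq φ hy
  have hd := ll_mul_of_eq φ (hy.trans hcd)
  rw [hac] at ha
  rw [hbd] at hb
  omega

theorem simP_diag_of_ll_eq (hC : CondC φ) {e f : S} (h : ll φ e = ll φ f) :
    simP φ (e, e) (f, f) := by
  obtain ⟨hef, hr, -⟩ := c_spec hC e f
  exact ⟨cx hC e f, cy hC e f, hef, hef, ll_cx_of_le hC h.ge, ll_cy_of_le hC h.le, hr⟩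

end Arithmetic

section Equivalence

variable {S : Type*} [Semigroup S] {φ : S →ₙ* Bicyclic}

theorem sim_refl (hC : CondC φ) (p : Sig φ) : sim φ p p :=
  ⟨cx hC p.1.1 p.1.1, cx hC p.1.1 p.1.1, rfl, rfl, ll_cx_self hC _, ll_cx_self hC _, rfl⟩

theorem sim_symm {p q : Sig φ} (h : sim φ p q) : sim φ q p := by
  obtain ⟨x, y, h1, h2, hx, hy, hr⟩ := h
  exact ⟨y, x, h1.symm, h2.symm, hy, hx, hr.symm⟩

theorem sim_trans (hC : CondC φ) {p q r : Sig φ} (hpq : sim φ p q) (hqr : sim φ q r) :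
    sim φ p r := by
  obtain ⟨x, y, hxa, hxb, hx, hy, hxy⟩ := hpq
  obtain ⟨u, v, huc, hud, hu, hv, huv⟩ := hqr
  obtain ⟨hzw, hrzw, -⟩ := c_spec hC y u
  have hyu : ll φ y = ll φ u := hy.trans hu.symm
  have hz : ll φ (cx hC y u) = rr φ x := (ll_cx_of_le hC hyu.ge).trans hxy.symm
  have hw : ll φ (cy hC y u) = rr φ v := (ll_cy_of_le hC hyu.le).trans huv
  refine ⟨cx hC y u * x, cy hC y u * v, ?_, ?_, ?_, ?_, ?_⟩
  · rw [mul_assoc, hxa, ← mul_assoc, hzw, mul_assoc, huc, mul_assoc]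
  · rw [mul_assoc, hxb, ← mul_assoc, hzw, mul_assoc, hud, mul_assoc]
  · rw [ll_mul_of_eq φ hz, hx]
  · rw [ll_mul_of_eq φ hw, hv]
  · rw [rr_mul_eq φ hz.ge, rr_mul_eq φ hw.ge, hrzw]

theorem cls_eq_iff (hC : CondC φ) {p q : Sig φ} : cls φ p = cls φ q ↔ sim φ p q :=
  Quot.eq.trans (Equivalence.eqvGen_iff ⟨sim_refl hC, sim_symm, sim_trans hC⟩)

theorem cls_diag_eq_iff (hC : CondC φ) {e f : S} :
    cls φ (mkSig φ e e rfl) = cls φ (mkSig φ f f rfl) ↔ ll φ e = ll φ f :=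
  (cls_eq_iff hC).trans ⟨fun h => (simP.ll_eq rfl rfl h).1, simP_diag_of_ll_eq hC⟩

end Equivalence

/-- For `(a, b) ∈ Σ` these are exactly the pairs `∼` to a diagonal pair `(e, e)`. -/
def Coequalized {S : Type*} [Mul S] (φ : S →ₙ* Bicyclic) (a b : S) : Prop :=
  ∃ w : S, ll φ w = rr φ a ∧ w * a = w * b

section Coequalized

variable {S : Type*} [Semigroup S] {φ : S →ₙ* Bicyclic}

theorem Coequalized.of_simP_diag {a b c : S} (h : simP φ (a, b) (c, c)) :
    Coequalized φ a b := by
  obtain ⟨x, y, hac, hbc, hx, -⟩ := h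
  exact ⟨x, hx, hac.trans hbc.symm⟩

theorem Coequalized.simP_diag (hC : CondC φ) {a b : S} (h : Coequalized φ a b) :
    ∃ e : S, simP φ (a, b) (e, e) ∧ ll φ e = ll φ a := by
  obtain ⟨w, hw, hwab⟩ := h
  have hy := ll_cx_self hC w
  refine ⟨w * a, ⟨cx hC w w * w, cx hC w w, mul_assoc _ _ _, ?_, ?_, ?_, ?_⟩,
    ll_mul_of_eq φ hw⟩
  · rw [mul_assoc, ← hwab]
  · rw [ll_mul_of_eq φ hy, hw]
  · rw [rr_mul_eq φ hw.ge, hy]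
  · exact rr_mul_eq φ hy.ge

theorem Coequalized.mul_left (hC : CondC φ) {a b x : S} (h : Coequalized φ a b)
    (hx : rr φ a ≤ ll φ x) : Coequalized φ (x * a) (x * b) := by
  obtain ⟨s, hs, hsab⟩ := h
  obtain ⟨hz, -⟩ := c_spec hC x s
  refine ⟨cx hC x s, ?_, ?_⟩
  · rw [ll_cx_of_le hC (hs.trans_le hx), rr_mul_eq φ hx]
  · rw [← mul_assoc, hz, mul_assoc, hsab, ← mul_assoc, ← hz, mul_assoc]

theorem Coequalized.trans (hC : CondC φ) {a b c : S} (hab : rr φ a = rr φ b)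
    (h₁ : Coequalized φ a b) (h₂ : Coequalized φ b c) : Coequalized φ a c := by
  obtain ⟨v, hv, hvab⟩ := h₁
  obtain ⟨w, hw, hwbc⟩ := h₂
  have hvw : ll φ v = ll φ w := hv.trans (hab.trans hw.symm)
  obtain ⟨hg, -⟩ := c_spec hC v w
  refine ⟨cx hC v w * v, by rw [ll_mul_of_eq φ (ll_cx_of_le hC hvw.ge), hv], ?_⟩
  rw [mul_assoc, hvab, ← mul_assoc, hg, mul_assoc, hwbc, ← mul_assoc, ← hg, mul_assoc]

theorem coequalized_pairMul (hC : CondC φ) {p q : Sig φ} (hp : Coequalized φ p.1.1 p.1.2)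
    (hq : Coequalized φ q.1.1 q.1.2) :
    Coequalized φ (pairMul hC p q).1.1 (pairMul hC p q).1.2 := by
  obtain ⟨hXY, hrXY, hX, hY⟩ := c_spec hC p.1.2 q.1.1
  have hpX : rr φ p.1.1 ≤ ll φ (cx hC p.1.2 q.1.1) := by rw [p.2]; omega
  have hqY : rr φ q.1.1 ≤ ll φ (cy hC p.1.2 q.1.1) := by omega
  have hXp : Coequalized φ (cx hC p.1.2 q.1.1 * p.1.1) (cx hC p.1.2 q.1.1 * p.1.2) :=
    hp.mul_left hC hpX
  have hYq : Coequalized φ (cx hC p.1.2 q.1.1 * p.1.2) (cy hC p.1.2 q.1.1 * q.1.2) :=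
    hXY ▸ hq.mul_left hC hqY
  refine hXp.trans hC ?_ hYq
  rw [rr_mul_eq φ hpX, rr_mul_eq φ (p.2 ▸ hpX)]

/-- Comparing `l` of the components of `[a,b]² ∼ [a,b]` forces both (C)-witnesses to the
level `r a`, where (B)(i) cancels `a` and `b`. -/
theorem Coequalized.of_sim_pairMul_self (hBi : CondBi φ) (hC : CondC φ) {p : Sig φ}
    (h : sim φ (pairMul hC p p) p) : Coequalized φ p.1.1 p.1.2 := by
  obtain ⟨⟨a, b⟩, hab⟩ := p
  dsimp only at hab
  obtain ⟨hXY, hrXY, hX, hY⟩ := c_spec hC b a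
  set X := cx hC b a
  set Y := cy hC b a
  have hsim : simP φ (X * a, Y * b) (a, b) := h
  have hXa : rr φ (X * a) = rr φ X := rr_mul_eq φ (by omega)
  have hYb : rr φ (Y * b) = rr φ Y := rr_mul_eq φ (by omega)
  have hlXa := ll_mul_of_le φ (x := X) (a := a) (by omega)
  have hlYb := ll_mul_of_le φ (x := Y) (a := b) (by omega)
  have hl := simP.ll_eq (by rw [hXa, hYb, hrXY]) hab hsim
  have hXlev : ll φ X = rr φ a := by omega
  have hYlev : ll φ Y = rr φ a := by omega
  obtain ⟨z, w, hza, hzb, hz, hw, -⟩ := hsim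
  dsimp only at hza hzb hz hw
  have hzX : ll φ z = rr φ X := hz.trans hXa
  have hzY : ll φ z = rr φ Y := hzX.trans hrXY
  have hcancelX : z * X = w := hBi _ _ a
    (by rw [ll_mul_of_eq φ hzX, hXlev]) hw.ge (by rw [mul_assoc, hza])
  have hcancelY : z * Y = w := hBi _ _ b
    (by rw [ll_mul_of_eq φ hzY, hYlev, hab]) (hw.trans hab).ge (by rw [mul_assoc, hzb])
  refine ⟨w, hw, ?_⟩
  calc w * a = z * (Y * a) := by rw [← mul_assoc, hcancelY]
    _ = w * b := by rw [← hXY, ← mul_assoc, hcancelX]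

end Coequalized

section Idempotents

variable {S : Type*} [Semigroup S] {φ : S →ₙ* Bicyclic}

theorem ll_pairMul_fst (hC : CondC φ) (p q : Sig φ) :
    ll φ (pairMul hC p q).1.1 = ll φ p.1.1 + (max (ll φ p.1.2) (ll φ q.1.1) - ll φ p.1.2) := by
  have hX := (c_spec hC p.1.2 q.1.1).2.2.1
  have hpX := ll_mul_of_le φ (x := cx hC p.1.2 q.1.1) (a := p.1.1) (by rw [p.2]; omega)
  have hp := p.2
  exact hpX.trans (by omega)

theorem sim_out_cls (hC : CondC φ) (p : Sig φ) : sim φ (Quot.out (cls φ p)) p :=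
  (cls_eq_iff hC).1 (Quot.out_eq _)

theorem exists_eq_cls_diag_of_qmul_self (hBi : CondBi φ) (hC : CondC φ) {u : QT φ}
    (hu : qmul hC u u = u) : ∃ e : S, u = cls φ (mkSig φ e e rfl) := by
  have hsim : sim φ (pairMul hC u.out u.out) u.out :=
    (cls_eq_iff hC).1 (hu.trans (Quot.out_eq u).symm)
  obtain ⟨e, he, -⟩ := (Coequalized.of_sim_pairMul_self hBi hC hsim).simP_diag hC
  exact ⟨e, (Quot.out_eq u).symm.trans ((cls_eq_iff hC).2 he)⟩

theorem exists_qmul_cls_diag (hC : CondC φ) (a b : S) :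
    ∃ e : S, qmul hC (cls φ (mkSig φ a a rfl)) (cls φ (mkSig φ b b rfl)) =
      cls φ (mkSig φ e e rfl) ∧ ll φ e = max (ll φ a) (ll φ b) := by
  set p := Quot.out (cls φ (mkSig φ a a rfl))
  set q := Quot.out (cls φ (mkSig φ b b rfl))
  have hpa : simP φ (p.1.1, p.1.2) (a, a) := sim_out_cls hC _
  have hqb : simP φ (q.1.1, q.1.2) (b, b) := sim_out_cls hC _
  obtain ⟨e, he, hle⟩ := (coequalized_pairMul hC (Coequalized.of_simP_diag hpa)
    (Coequalized.of_simP_diag hqb)).simP_diag hC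
  refine ⟨e, (cls_eq_iff hC).2 he, ?_⟩
  have hl := ll_pairMul_fst hC p q
  have hpl := simP.ll_eq p.2 rfl hpa
  have hql := simP.ll_eq q.2 rfl hqb
  omega

theorem qmul_cls_diag_eq_left_iff (hC : CondC φ) {a b : S} :
    qmul hC (cls φ (mkSig φ a a rfl)) (cls φ (mkSig φ b b rfl)) = cls φ (mkSig φ a a rfl) ↔
      ll φ b ≤ ll φ a := by
  obtain ⟨e, he, hle⟩ := exists_qmul_cls_diag hC a b
  rw [he, cls_diag_eq_iff hC, hle]
  exact max_eq_left_iff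

theorem qmul_cls_diag_eq_right_iff (hC : CondC φ) {a b : S} :
    qmul hC (cls φ (mkSig φ a a rfl)) (cls φ (mkSig φ b b rfl)) = cls φ (mkSig φ b b rfl) ↔
      ll φ a ≤ ll φ b := by
  obtain ⟨e, he, hle⟩ := exists_qmul_cls_diag hC a b
  rw [he, cls_diag_eq_iff hC, hle]
  exact max_eq_right_iff

end Idempotents

def QT.level {S : Type*} [Mul S] (φ : S →ₙ* Bicyclic) : QT φ → ℕ :=
  Quot.lift (fun p => ll φ p.1.2) fun p q h => (simP.ll_eq p.2 q.2 h).2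

theorem stmt17_general {S : Type*} [Semigroup S] (φ : S →ₙ* Bicyclic)
    (hA : CondA φ) (hBi : CondBi φ) (hC : CondC φ) :
    (∀ a b : S, ll φ b ≤ ll φ a →
      qmul hC (cls φ (mkSig φ a a rfl)) (cls φ (mkSig φ b b rfl)) =
        cls φ (mkSig φ a a rfl)) ∧
    (∀ a b : S, ll φ a ≤ ll φ b →
      qmul hC (cls φ (mkSig φ a a rfl)) (cls φ (mkSig φ b b rfl)) =
        cls φ (mkSig φ b b rfl)) ∧
    (∀ u v : QT φ, qmul hC u u = u → qmul hC v v = v →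
      qmul hC u v = qmul hC v u) ∧
    (∀ a b : S, ll φ a = ll φ b →
      cls φ (mkSig φ a a rfl) = cls φ (mkSig φ b b rfl)) ∧
    (∃ F : QT φ → ℕ,
      (∀ a : S, F (cls φ (mkSig φ a a rfl)) = ll φ a) ∧
      (∀ u v : QT φ, qmul hC u u = u → qmul hC v v = v →
        (F u = F v → u = v) ∧
        ((qmul hC u v = u ∧ qmul hC v u = u) ↔ F v ≤ F u)) ∧
      (∀ n : ℕ, ∃ u : QT φ, qmul hC u u = u ∧ F u = n)) := by
  refine ⟨fun a b => (qmul_cls_diag_eq_left_iff hC).2,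
    fun a b => (qmul_cls_diag_eq_right_iff hC).2, ?_,
    fun a b => (cls_diag_eq_iff hC).2, QT.level φ, fun a => rfl, ?_, ?_⟩
  · intro u v hu hv
    obtain ⟨e, rfl⟩ := exists_eq_cls_diag_of_qmul_self hBi hC hu
    obtain ⟨f, rfl⟩ := exists_eq_cls_diag_of_qmul_self hBi hC hv
    rcases le_total (ll φ e) (ll φ f) with h | h
    · rw [(qmul_cls_diag_eq_right_iff hC).2 h, (qmul_cls_diag_eq_left_iff hC).2 h]
    · rw [(qmul_cls_diag_eq_left_iff hC).2 h, (qmul_cls_diag_eq_right_iff hC).2 h]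
  · intro u v hu hv
    obtain ⟨e, rfl⟩ := exists_eq_cls_diag_of_qmul_self hBi hC hu
    obtain ⟨f, rfl⟩ := exists_eq_cls_diag_of_qmul_self hBi hC hv
    exact ⟨(cls_diag_eq_iff hC).2, fun h => (qmul_cls_diag_eq_left_iff hC).1 h.1,
      fun h => ⟨(qmul_cls_diag_eq_left_iff hC).2 h, (qmul_cls_diag_eq_right_iff hC).2 h⟩⟩
  · intro n
    obtain ⟨a, rfl⟩ := exists_ll_eq hA n
    exact ⟨cls φ (mkSig φ a a rfl), (qmul_cls_diag_eq_left_iff hC).2 le_rfl, rfl⟩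

/-- `[a,a][b,b] = [a,a]` if `l a ≥ l b` and `= [b,b]` if `l b ≥ l a`; idempotents
of `Q` commute, `[a,a] = [b,b]` when `l a = l b`, and the idempotents of `Q` form
an ω-chain: `[a,a] ↦ l a` extends to an order-reversing bijection between the
idempotents of `Q` and `ℕ`. -/
theorem stmt17 {S : Type*} [Semigroup S] (φ : S →ₙ* Bicyclic)
    (hA : CondA φ) (hBi : CondBi φ) (hBii : CondBii φ) (hC : CondC φ) :
    (∀ a b : S, ll φ b ≤ ll φ a →
      qmul hC (cls φ (mkSig φ a a rfl)) (cls φ (mkSig φ b b rfl)) =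
        cls φ (mkSig φ a a rfl)) ∧
    (∀ a b : S, ll φ a ≤ ll φ b →
      qmul hC (cls φ (mkSig φ a a rfl)) (cls φ (mkSig φ b b rfl)) =
        cls φ (mkSig φ b b rfl)) ∧
    (∀ u v : QT φ, qmul hC u u = u → qmul hC v v = v →
      qmul hC u v = qmul hC v u) ∧
    (∀ a b : S, ll φ a = ll φ b →
      cls φ (mkSig φ a a rfl) = cls φ (mkSig φ b b rfl)) ∧
    (∃ F : QT φ → ℕ,
      (∀ a : S, F (cls φ (mkSig φ a a rfl)) = ll φ a) ∧
      (∀ u v : QT φ, qmul hC u u = u → qmul hC v v = v →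
        (F u = F v → u = v) ∧
        ((qmul hC u v = u ∧ qmul hC v u = u) ↔ F v ≤ F u)) ∧
      (∀ n : ℕ, ∃ u : QT φ, qmul hC u u = u ∧ F u = n)) :=
  stmt17_general φ hA hBi hC
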